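/- arXiv:2603.03058 — 4 statements merged into one kernel-verified Lean document; each statement's English description precedes it below -/
import Mathlib

section
/- Assume the Setting. Let i, j ≥ 1, let (x_λ)_{λ∈I} be a norm-bounded net in E^{⊗i} converging to x ∈ E^{⊗i} in the weak-* topology induced by the predual F^{⊗i}, and let (x'_λ)_{λ∈I} be a norm-bounded net in E^{⊗j} converging to x' ∈ E^{⊗j} in the weak-* topology induced by F^{⊗j}. Then the net (x_λ ⊗ x'_λ)_{λ∈I} converges to x ⊗ x' in the weak-* topology of E^{⊗(i+j)} induced by F^{⊗(i+j)}. -/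
/-!
STATEMENT 5:
Assume the Setting (E = F* with strong crossnorm families on the tensor powers of E and F, the
completion E^{⊗n} being the dual of F^{⊗n}). Let i, j ≥ 1, let (x_λ) be a norm-bounded net in
E^{⊗i} converging to x in the weak-* topology induced by the predual F^{⊗i}, and let (x'_λ) be a
norm-bounded net in E^{⊗j} converging to x' in the weak-* topology induced by F^{⊗j}. Then
(x_λ ⊗ x'_λ) converges to x ⊗ x' in the weak-* topology of E^{⊗(i+j)} induced by F^{⊗(i+j)}.

We encode the Setting abstractly: `Y n` is the Banach space F^{⊗n} and `E^{⊗n}` is realized as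
its dual `NormedSpace.Dual ℝ (Y n)`.  The tensor multiplication maps on the E-side (`mulE`) and
on the F-side (`mulF`) are given, satisfying the compatibility of the duality pairing
⟨x ⊗ x', y ⊗ y'⟩ = ⟨x,y⟩⟨x',y'⟩, the strong crossnorm property ‖x ⊗ x'‖ = ‖x‖‖x'‖, and the span
of elementary tensors mulF y y' is dense in Y (i+j) (F^{⊗(i+j)} is the completion of
F^{⊗i} ⊗_a F^{⊗j}).  Weak-* convergence is pointwise convergence on the predual.
-/

open Filter

theorem weakStar_convergence_of_tensor_product_of_bounded_nets
    {Y : ℕ → Type*} [∀ n, NormedAddCommGroup (Y n)] [∀ n, NormedSpace ℝ (Y n)]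
    [∀ n, CompleteSpace (Y n)]
    (i j : ℕ) (hi : 1 ≤ i) (hj : 1 ≤ j)
    -- tensor multiplication on the E-side (E^{⊗n} = Dual (Y n))
    (mulE : StrongDual ℝ (Y i) →L[ℝ] StrongDual ℝ (Y j) →L[ℝ]
      StrongDual ℝ (Y (i + j)))
    -- tensor multiplication on the F-side
    (mulF : Y i →ₗ[ℝ] Y j →ₗ[ℝ] Y (i + j))
    -- F^{⊗(i+j)} is the completion of F^{⊗i} ⊗_a F^{⊗j}: elementary tensors span densely
    (hdense : Dense (↑(Submodule.span ℝ
      (Set.range fun p : Y i × Y j => mulF p.1 p.2)) : Set (Y (i + j))))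
    -- compatibility of the pairing: ⟨x ⊗ x', y ⊗ y'⟩ = ⟨x, y⟩ ⟨x', y'⟩
    (hcompat : ∀ (x : StrongDual ℝ (Y i)) (x' : StrongDual ℝ (Y j))
      (y : Y i) (y' : Y j), mulE x x' (mulF y y') = x y * x' y')
    -- strong crossnorm property on the E-side
    (hcross : ∀ (x : StrongDual ℝ (Y i)) (x' : StrongDual ℝ (Y j)),
      ‖mulE x x'‖ = ‖x‖ * ‖x'‖)
    -- the nets
    {I : Type*} [Preorder I] [Nonempty I] [IsDirected I (· ≤ ·)]
    (x : I → StrongDual ℝ (Y i)) (x₀ : StrongDual ℝ (Y i))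
    (x' : I → StrongDual ℝ (Y j)) (x₀' : StrongDual ℝ (Y j))
    (C C' : ℝ) (hb : ∀ l, ‖x l‖ ≤ C) (hb' : ∀ l, ‖x' l‖ ≤ C')
    (hx : ∀ y : Y i, Tendsto (fun l => x l y) atTop (nhds (x₀ y)))
    (hx' : ∀ y : Y j, Tendsto (fun l => x' l y) atTop (nhds (x₀' y))) :
    ∀ y : Y (i + j),
      Tendsto (fun l => mulE (x l) (x' l) y) atTop (nhds (mulE x₀ x₀' y)) := by
  have hC : 0 ≤ C := le_trans (norm_nonneg _) (hb (Classical.arbitrary I))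
  have hC' : 0 ≤ C' := le_trans (norm_nonneg _) (hb' (Classical.arbitrary I))
  set K := C * C' with hK
  have hKnn : 0 ≤ K := mul_nonneg hC hC'
  have hbl : ∀ l : I, ‖mulE (x l) (x' l)‖ ≤ K := fun l => by
    rw [hcross]; exact mul_le_mul (hb l) (hb' l) (norm_nonneg _) hC
  have hx₀ : ‖x₀‖ ≤ C := by
    refine ContinuousLinearMap.opNorm_le_bound _ hC fun y => ?_
    refine le_of_tendsto (hx y).norm (Eventually.of_forall fun l => ?_)
    exact le_trans ((x l).le_opNorm y)
      (mul_le_mul_of_nonneg_right (hb l) (norm_nonneg y))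
  have hx₀' : ‖x₀'‖ ≤ C' := by
    refine ContinuousLinearMap.opNorm_le_bound _ hC' fun y => ?_
    refine le_of_tendsto (hx' y).norm (Eventually.of_forall fun l => ?_)
    exact le_trans ((x' l).le_opNorm y)
      (mul_le_mul_of_nonneg_right (hb' l) (norm_nonneg y))
  have hb0 : ‖mulE x₀ x₀'‖ ≤ K := by
    rw [hcross]; exact mul_le_mul hx₀ hx₀' (norm_nonneg _) hC
  have hspan : ∀ z ∈ Submodule.span ℝ (Set.range fun p : Y i × Y j => mulF p.1 p.2),
      Tendsto (fun l => mulE (x l) (x' l) z) atTop (nhds (mulE x₀ x₀' z)) := by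
    intro z hz
    induction hz using Submodule.span_induction with
    | mem w hw =>
        obtain ⟨⟨y, y'⟩, rfl⟩ := hw
        simp only [hcompat]
        exact (hx y).mul (hx' y')
    | zero => simp only [map_zero]; exact tendsto_const_nhds
    | add a b _ _ ha hb => simpa [map_add] using ha.add hb
    | smul c a _ ha =>
        simpa [map_smul, smul_eq_mul] using ha.const_mul c
  intro y
  rw [Metric.tendsto_nhds]
  intro ε hε
  have hδ : 0 < ε / (3 * (K + 1)) := by positivity
  obtain ⟨z, hz, hzy⟩ := Metric.mem_closure_iff.mp (hdense y) _ hδ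
  have hzy' : ‖y - z‖ < ε / (3 * (K + 1)) := by
    rwa [dist_eq_norm] at hzy
  have hterm : ∀ (T : StrongDual ℝ (Y (i + j))), ‖T‖ ≤ K →
      ‖T y - T z‖ < ε / 3 := by
    intro T hT
    have h1 : ‖T y - T z‖ ≤ K * ‖y - z‖ := by
      rw [← map_sub]
      exact le_trans (T.le_opNorm _) (mul_le_mul_of_nonneg_right hT (norm_nonneg _))
    have h2 : K * ‖y - z‖ ≤ (K + 1) * ‖y - z‖ :=
      mul_le_mul_of_nonneg_right (by linarith) (norm_nonneg _)
    have h3 : (K + 1) * ‖y - z‖ < (K + 1) * (ε / (3 * (K + 1))) :=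
      mul_lt_mul_of_pos_left hzy' (by linarith)
    have h4 : (K + 1) * (ε / (3 * (K + 1))) = ε / 3 := by
      field_simp
    linarith
  have hev := (Metric.tendsto_nhds.mp (hspan z hz)) (ε / 3) (by linarith)
  filter_upwards [hev] with l hl
  have t1 : ‖mulE (x l) (x' l) y - mulE (x l) (x' l) z‖ < ε / 3 := hterm _ (hbl l)
  have t3 : ‖mulE x₀ x₀' y - mulE x₀ x₀' z‖ < ε / 3 := hterm _ hb0
  rw [Real.dist_eq] at hl ⊢
  have : mulE (x l) (x' l) y - mulE x₀ x₀' y =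
      (mulE (x l) (x' l) y - mulE (x l) (x' l) z) +
      (mulE (x l) (x' l) z - mulE x₀ x₀' z) +
      (mulE x₀ x₀' z - mulE x₀ x₀' y) := by ring
  rw [this]
  calc |_ + _ + _| ≤ |mulE (x l) (x' l) y - mulE (x l) (x' l) z| +
        |mulE (x l) (x' l) z - mulE x₀ x₀' z| + |mulE x₀ x₀' z - mulE x₀ x₀' y|
      := abs_add_three _ _ _
    _ < ε := by
        rw [← Real.norm_eq_abs, ← Real.norm_eq_abs, ← Real.norm_eq_abs]
        have t3' : ‖mulE x₀ x₀' z - mulE x₀ x₀' y‖ < ε / 3 := by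
          rwa [norm_sub_rev]
        have t2 : ‖mulE (x l) (x' l) z - mulE x₀ x₀' z‖ < ε / 3 := by
          rwa [Real.norm_eq_abs]
        linarith
end

section
/- Let H be an infinite-dimensional real Hilbert space with orthonormal basis (e_i)_{i∈ℕ}. Then there is no topology τ on the injective tensor product H ⊗_ε H such that (i) the closed unit ball of (H ⊗_ε H, ‖·‖_ε) is relatively compact with respect to τ, and (ii) for all i, j ∈ ℕ the linear functional ⟨·, e_i⟩ ⊗ ⟨·, e_j⟩ on H ⊗_ε H is τ-continuous. -/
/-!
STATEMENT 11:
Let H be an infinite-dimensional real Hilbert space with orthonormal basis (e_i)_{i∈ℕ}. Then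
there is no topology τ on the injective tensor product H ⊗_ε H such that (i) the closed unit ball
of (H ⊗_ε H, ‖·‖_ε) is relatively compact with respect to τ, and (ii) for all i, j ∈ ℕ the linear
functional ⟨·, e_i⟩ ⊗ ⟨·, e_j⟩ on H ⊗_ε H is τ-continuous.

The completion H ⊗_ε H is encoded abstractly as a Banach space `Xε` together with a linear map
`J : H ⊗[ℝ] H →ₗ[ℝ] Xε` which is isometric for the injective tensor norm and has dense range.
The functional ⟨·, e_i⟩ ⊗ ⟨·, e_j⟩ on H ⊗_ε H is the (unique) continuous extension of the
corresponding functional on H ⊗_a H, i.e. a norm-continuous functional Φ with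
Φ (J v) = (⟨·,e_i⟩ ⊗ ⟨·,e_j⟩) v.
-/

open scoped TensorProduct InnerProductSpace

variable {H : Type*} [NormedAddCommGroup H] [InnerProductSpace ℝ H] [CompleteSpace H]

/-- The functional `φ ⊗ ψ` on the algebraic tensor product `H ⊗_a H`. -/
noncomputable def dualPairFunctional (φ ψ : H →L[ℝ] ℝ) : H ⊗[ℝ] H →ₗ[ℝ] ℝ :=
  (TensorProduct.lid ℝ ℝ).toLinearMap ∘ₗ
    TensorProduct.map (φ : H →ₗ[ℝ] ℝ) (ψ : H →ₗ[ℝ] ℝ)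

/-- The injective tensor norm on `H ⊗_a H`. -/
noncomputable def injNorm2 (u : H ⊗[ℝ] H) : ℝ :=
  sSup {c : ℝ | ∃ φ ψ : H →L[ℝ] ℝ, ‖φ‖ ≤ 1 ∧ ‖ψ‖ ≤ 1 ∧ c = |dualPairFunctional φ ψ u|}

lemma dualPairFunctional_tmul (φ ψ : H →L[ℝ] ℝ) (a b : H) :
    dualPairFunctional φ ψ (a ⊗ₜ b) = φ a * ψ b := by
  simp [dualPairFunctional]

lemma dual_bdd (u : H ⊗[ℝ] H) :
    ∃ C : ℝ, ∀ φ ψ : H →L[ℝ] ℝ, ‖φ‖ ≤ 1 → ‖ψ‖ ≤ 1 → |dualPairFunctional φ ψ u| ≤ C := by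
  induction u using TensorProduct.induction_on with
  | zero => exact ⟨0, fun φ ψ _ _ => by simp⟩
  | tmul a b =>
    refine ⟨‖a‖ * ‖b‖, fun φ ψ hφ hψ => ?_⟩
    rw [dualPairFunctional_tmul, abs_mul]
    have h1 : |φ a| ≤ ‖a‖ := by
      calc |φ a| ≤ ‖φ‖ * ‖a‖ := φ.le_opNorm a
      _ ≤ 1 * ‖a‖ := by gcongr
      _ = ‖a‖ := one_mul _
    have h2 : |ψ b| ≤ ‖b‖ := by
      calc |ψ b| ≤ ‖ψ‖ * ‖b‖ := ψ.le_opNorm b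
      _ ≤ 1 * ‖b‖ := by gcongr
      _ = ‖b‖ := one_mul _
    exact mul_le_mul h1 h2 (abs_nonneg _) (norm_nonneg a)
  | add x y hx hy =>
    obtain ⟨C1, h1⟩ := hx
    obtain ⟨C2, h2⟩ := hy
    refine ⟨C1 + C2, fun φ ψ hφ hψ => ?_⟩
    rw [map_add]
    exact (abs_add_le _ _).trans (add_le_add (h1 φ ψ hφ hψ) (h2 φ ψ hφ hψ))

lemma abs_dual_le_injNorm2 (u : H ⊗[ℝ] H) (φ ψ : H →L[ℝ] ℝ) (hφ : ‖φ‖ ≤ 1) (hψ : ‖ψ‖ ≤ 1) :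
    |dualPairFunctional φ ψ u| ≤ injNorm2 u := by
  obtain ⟨C, hC⟩ := dual_bdd u
  refine le_csSup ⟨C, ?_⟩ ⟨φ, ψ, hφ, hψ, rfl⟩
  rintro c ⟨φ', ψ', hφ', hψ', rfl⟩
  exact hC φ' ψ' hφ' hψ'

lemma injNorm2_le (u : H ⊗[ℝ] H) {C : ℝ} (hC0 : 0 ≤ C)
    (h : ∀ φ ψ : H →L[ℝ] ℝ, ‖φ‖ ≤ 1 → ‖ψ‖ ≤ 1 → |dualPairFunctional φ ψ u| ≤ C) :
    injNorm2 u ≤ C := by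
  apply Real.sSup_le _ hC0
  rintro c ⟨φ, ψ, hφ, hψ, rfl⟩
  exact h φ ψ hφ hψ

lemma injNorm2_partial_sum (e : ℕ → H) (he : Orthonormal ℝ e) (n : ℕ) :
    injNorm2 (∑ k ∈ Finset.range n, e k ⊗ₜ[ℝ] e k) ≤ 1 := by
  apply injNorm2_le _ zero_le_one
  intro φ ψ hφ hψ
  rw [map_sum]
  simp only [dualPairFunctional_tmul]
  set f := (InnerProductSpace.toDual ℝ H).symm φ with hf
  set g := (InnerProductSpace.toDual ℝ H).symm ψ with hg
  have hfe : ∀ k, φ (e k) = ⟪f, e k⟫_ℝ := fun k =>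
    (InnerProductSpace.toDual_symm_apply).symm
  have hge : ∀ k, ψ (e k) = ⟪g, e k⟫_ℝ := fun k =>
    (InnerProductSpace.toDual_symm_apply).symm
  simp only [hfe, hge]
  have hcs := Finset.sum_mul_sq_le_sq_mul_sq (Finset.range n)
    (fun k => ⟪f, e k⟫_ℝ) (fun k => ⟪g, e k⟫_ℝ)
  have hbf : ∑ k ∈ Finset.range n, ⟪f, e k⟫_ℝ ^ 2 ≤ 1 := by
    have := he.sum_inner_products_le (s := Finset.range n) f
    calc ∑ k ∈ Finset.range n, ⟪f, e k⟫_ℝ ^ 2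
        = ∑ k ∈ Finset.range n, ‖⟪e k, f⟫_ℝ‖ ^ 2 := by
          refine Finset.sum_congr rfl fun k _ => ?_
          rw [real_inner_comm, Real.norm_eq_abs, sq_abs]
      _ ≤ ‖f‖ ^ 2 := this
      _ ≤ 1 := by
          have : ‖f‖ ≤ 1 := by rw [hf, LinearIsometryEquiv.norm_map]; exact hφ
          nlinarith [norm_nonneg f]
  have hbg : ∑ k ∈ Finset.range n, ⟪g, e k⟫_ℝ ^ 2 ≤ 1 := by
    have := he.sum_inner_products_le (s := Finset.range n) g
    calc ∑ k ∈ Finset.range n, ⟪g, e k⟫_ℝ ^ 2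
        = ∑ k ∈ Finset.range n, ‖⟪e k, g⟫_ℝ‖ ^ 2 := by
          refine Finset.sum_congr rfl fun k _ => ?_
          rw [real_inner_comm, Real.norm_eq_abs, sq_abs]
      _ ≤ ‖g‖ ^ 2 := this
      _ ≤ 1 := by
          have : ‖g‖ ≤ 1 := by rw [hg, LinearIsometryEquiv.norm_map]; exact hψ
          nlinarith [norm_nonneg g]
  have h1 : (∑ k ∈ Finset.range n, ⟪f, e k⟫_ℝ * ⟪g, e k⟫_ℝ) ^ 2 ≤ 1 := by
    refine hcs.trans ?_
    calc (∑ k ∈ Finset.range n, ⟪f, e k⟫_ℝ ^ 2) * ∑ k ∈ Finset.range n, ⟪g, e k⟫_ℝ ^ 2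
        ≤ 1 * 1 := by
          refine mul_le_mul hbf hbg ?_ zero_le_one
          exact Finset.sum_nonneg fun k _ => sq_nonneg _
      _ = 1 := one_mul 1
  nlinarith [abs_nonneg (∑ k ∈ Finset.range n, ⟪f, e k⟫_ℝ * ⟪g, e k⟫_ℝ),
    sq_abs (∑ k ∈ Finset.range n, ⟪f, e k⟫_ℝ * ⟪g, e k⟫_ℝ)]

lemma dual_diag_tendsto (e : ℕ → H) (he : Orthonormal ℝ e) (v : H ⊗[ℝ] H) :
    Filter.Tendsto (fun i => dualPairFunctional (innerSL ℝ (e i)) (innerSL ℝ (e i)) v)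
      Filter.atTop (nhds 0) := by
  induction v using TensorProduct.induction_on with
  | zero => simpa using tendsto_const_nhds
  | tmul a b =>
    simp only [dualPairFunctional_tmul]
    have key : ∀ c : H, Filter.Tendsto (fun i => (innerSL ℝ (e i)) c) Filter.atTop (nhds 0) := by
      intro c
      have hsum := he.inner_products_summable (x := c)
      have h2 : Filter.Tendsto (fun i => ‖⟪e i, c⟫_ℝ‖ ^ 2) Filter.atTop (nhds 0) :=
        hsum.tendsto_atTop_zero
      have h3 : Filter.Tendsto (fun i => Real.sqrt (‖⟪e i, c⟫_ℝ‖ ^ 2)) Filter.atTop (nhds 0) := by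
        have := (Real.continuous_sqrt.tendsto 0).comp h2
        simpa [Function.comp_def] using this
      have h4 : Filter.Tendsto (fun i => ‖⟪e i, c⟫_ℝ‖) Filter.atTop (nhds 0) := by
        refine h3.congr fun i => ?_
        rw [Real.sqrt_sq (norm_nonneg _)]
      simpa [innerSL_apply_apply] using tendsto_zero_iff_norm_tendsto_zero.2 h4
    have := (key a).mul (key b)
    simpa using this
  | add x y hx hy =>
    have := hx.add hy
    simpa using this

/-- A linear functional that is bounded on the unit ball and dominated by the norm on a dense
subspace is dominated by the norm everywhere. -/
lemma functional_bound_of_dense {Xε : Type*} [NormedAddCommGroup Xε] [NormedSpace ℝ Xε]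
    (J : H ⊗[ℝ] H →ₗ[ℝ] Xε) (hJdense : DenseRange J) (Φ : Xε →ₗ[ℝ] ℝ) (C : ℝ)
    (hC : ∀ y : Xε, ‖y‖ ≤ 1 → |Φ y| ≤ C)
    (hD : ∀ v, |Φ (J v)| ≤ ‖J v‖) : ∀ y, |Φ y| ≤ ‖y‖ := by
  have hCb : ∀ y : Xε, ‖Φ y‖ ≤ C * ‖y‖ := by
    intro y
    rcases eq_or_ne y 0 with rfl | hy
    · simp
    · have hny : (0:ℝ) < ‖y‖ := norm_pos_iff.2 hy
      have h1 : ‖(‖y‖⁻¹ • y)‖ ≤ 1 := by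
        rw [norm_smul, norm_inv, norm_norm, inv_mul_cancel₀ hny.ne']
      have h2 := hC _ h1
      rw [map_smul, smul_eq_mul, abs_mul, abs_inv, abs_norm] at h2
      calc ‖Φ y‖ = ‖y‖ * (‖y‖⁻¹ * |Φ y|) := by
            rw [Real.norm_eq_abs, ← mul_assoc, mul_inv_cancel₀ hny.ne', one_mul]
        _ ≤ ‖y‖ * C := by gcongr
        _ = C * ‖y‖ := mul_comm _ _
  have hcont : Continuous Φ := AddMonoidHomClass.continuous_of_bound Φ C hCb
  have hclosed : IsClosed {y : Xε | |Φ y| ≤ ‖y‖} :=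
    isClosed_le (continuous_abs.comp hcont) continuous_norm
  have hrange : Set.range J ⊆ {y : Xε | |Φ y| ≤ ‖y‖} := by
    rintro _ ⟨v, rfl⟩; exact hD v
  intro y
  have hsub : Set.univ ⊆ {y : Xε | |Φ y| ≤ ‖y‖} := by
    rw [← hclosed.closure_eq]
    calc Set.univ = closure (Set.range J) := hJdense.closure_range.symm
      _ ⊆ closure {y : Xε | |Φ y| ≤ ‖y‖} := closure_mono hrange
  exact hsub (Set.mem_univ y)


theorem no_topology_with_compact_ball_and_continuous_coordinate_functionals
    (e : ℕ → H) (he : Orthonormal ℝ e)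
    (hbasis : (Submodule.span ℝ (Set.range e)).topologicalClosure = ⊤)
    {Xε : Type*} [NormedAddCommGroup Xε] [NormedSpace ℝ Xε] [CompleteSpace Xε]
    (J : H ⊗[ℝ] H →ₗ[ℝ] Xε)
    (hJiso : ∀ v, ‖J v‖ = injNorm2 v)
    (hJdense : DenseRange J) :
    ¬ ∃ τ : TopologicalSpace Xε,
        (@IsCompact Xε τ (@closure Xε τ {u : Xε | ‖u‖ ≤ 1})) ∧
        (∀ i j : ℕ, ∃ Φ : Xε →L[ℝ] ℝ,
          (∀ v : H ⊗[ℝ] H, Φ (J v) = dualPairFunctional (innerSL ℝ (e i)) (innerSL ℝ (e j)) v) ∧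
          @Continuous Xε ℝ τ _ Φ) := by
  rintro ⟨τ, hcomp, hΦall⟩
  choose Φ hΦJ hΦcont using fun i => hΦall i i
  have hnorm_inner : ∀ i, ‖innerSL ℝ (e i)‖ ≤ 1 := fun i => by
    rw [innerSL_apply_norm, he.1 i]
  -- each Φ i is dominated by the norm
  have hbound : ∀ i (y : Xε), |Φ i y| ≤ ‖y‖ := by
    intro i
    have himg : IsCompact ((Φ i) '' (closure {y : Xε | ‖y‖ ≤ 1})) :=
      hcomp.image (Φ i).continuous
    obtain ⟨C, hC⟩ := himg.isBounded.exists_norm_le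
    refine functional_bound_of_dense J hJdense (Φ i).toLinearMap C (fun y hy => ?_) (fun v => ?_)
    · have hmem : (Φ i) y ∈ (Φ i) '' (closure {y : Xε | ‖y‖ ≤ 1}) :=
        Set.mem_image_of_mem _ (subset_closure hy)
      simpa [Real.norm_eq_abs] using hC _ hmem
    · show |Φ i (J v)| ≤ ‖J v‖
      rw [hΦJ i v, hJiso v]
      exact abs_dual_le_injNorm2 v _ _ (hnorm_inner i) (hnorm_inner i)
  -- the sequence of partial identity sums
  set u : ℕ → Xε := fun n => J (∑ k ∈ Finset.range (n + 1), e k ⊗ₜ[ℝ] e k) with hu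
  have hunorm : ∀ n, ‖u n‖ ≤ 1 := fun n => by
    rw [hu, hJiso]; exact injNorm2_partial_sum e he (n + 1)
  have hKmem : ∀ n, u n ∈ closure {y : Xε | ‖y‖ ≤ 1} := fun n =>
    subset_closure (hunorm n)
  have hle : Filter.map u Filter.atTop ≤ Filter.principal (closure {y : Xε | ‖y‖ ≤ 1}) := by
    rw [Filter.le_principal_iff, Filter.mem_map]
    exact Filter.univ_mem' hKmem
  obtain ⟨x, -, hx⟩ := hcomp hle
  classical
  have hΦu : ∀ i n, i ≤ n → Φ i (u n) = 1 := by
    intro i n hin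
    rw [hu]
    simp only [hΦJ i, map_sum]
    rw [Finset.sum_congr rfl (fun k _ => dualPairFunctional_tmul _ _ (e k) (e k))]
    have hval : ∀ k, (innerSL ℝ (e i)) (e k) = if i = k then (1 : ℝ) else 0 := fun k => by
      simpa [innerSL_apply_apply] using orthonormal_iff_ite.1 he i k
    simp only [hval]
    rw [Finset.sum_eq_single i]
    · simp
    · intro k _ hk; simp [Ne.symm hk]
    · intro h; exact absurd (Finset.mem_range.2 (Nat.lt_succ_of_le hin)) h
  -- Φ i x = 1 for all i
  have hΦx : ∀ i, Φ i x = 1 := by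
    intro i
    have hca : ContinuousAt (Φ i) x := (Φ i).continuous.continuousAt
    have hcl : ClusterPt (Φ i x) (Filter.map (Φ i) (Filter.map u Filter.atTop)) :=
      hx.map hca Filter.tendsto_map
    have htend : Filter.Tendsto (fun n => Φ i (u n)) Filter.atTop (nhds 1) := by
      apply Filter.Tendsto.congr' _ tendsto_const_nhds
      filter_upwards [Filter.eventually_ge_atTop i] with n hn
      exact (hΦu i n hn).symm
    have hle2 : Filter.map (Φ i) (Filter.map u Filter.atTop) ≤ nhds 1 := by
      rw [Filter.map_map]; exact htend
    exact eq_of_nhds_neBot (hcl.mono hle2).neBot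
  -- density: approximate x
  obtain ⟨v, hv⟩ := hJdense.exists_dist_lt x (by norm_num : (0:ℝ) < 1/4)
  have hv' : ‖x - J v‖ < 1/4 := by rwa [← dist_eq_norm]
  have htend0 := dual_diag_tendsto e he v
  have hev : ∀ᶠ i in Filter.atTop,
      |dualPairFunctional (innerSL ℝ (e i)) (innerSL ℝ (e i)) v| < 1/4 := by
    have := htend0.abs
    simpa using this.eventually (gt_mem_nhds (by norm_num : |(0:ℝ)| < 1/4))
  obtain ⟨i, hi⟩ := hev.exists
  have hΦJv : |Φ i (J v)| < 1/4 := by rw [hΦJ i v]; exact hi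
  have hsplit : Φ i x = Φ i (x - J v) + Φ i (J v) := by rw [map_sub]; ring
  have hfin : (1:ℝ) ≤ 1/2 := by
    calc (1:ℝ) = |Φ i x| := by rw [hΦx i]; norm_num
      _ ≤ |Φ i (x - J v)| + |Φ i (J v)| := by rw [hsplit]; exact abs_add_le _ _
      _ ≤ ‖x - J v‖ + 1/4 := add_le_add (hbound i _) hΦJv.le
      _ ≤ 1/4 + 1/4 := by linarith
      _ = 1/2 := by norm_num
  linarith
end

section
/- Equip ℝ³ with the norm ⦀(t,x,y)⦀ = |t| + max(|x|,|y|), identify ℝ³ ⊗ ℝ³ with the space of 3×3 real matrices via the standard basis (so that u ⊗ v corresponds to the matrix u vᵀ), and equip ℝ³ ⊗ ℝ³ with the norm ⦀A⦀₂ = |A₁₁| + max(|A₁₂|,|A₁₃|) + max(|A₂₁|,|A₃₁|) + max(|A₂₂|,|A₂₃|,|A₃₂|,|A₃₃|). Define the linear map φ : ℝ³ → ℝ³ by φ(t,x,y) = (x+y, x−y, x−y). Then the operator norm of φ with respect to ⦀·⦀ equals 2, while the operator norm of φ ⊗ φ on (ℝ³ ⊗ ℝ³, ⦀·⦀₂)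 is at least 8; in particular ‖φ ⊗ φ‖ > ‖φ‖², so the pair of norms (⦀·⦀, ⦀·⦀₂) does not satisfy the strongly uniform crossnorm property. -/
/-!
STATEMENT 16:
Equip ℝ³ with the norm ⦀(t,x,y)⦀ = |t| + max(|x|,|y|), identify ℝ³ ⊗ ℝ³ with the space of 3×3
real matrices (u ⊗ v ↦ u vᵀ), and equip ℝ³ ⊗ ℝ³ with the norm
⦀A⦀₂ = |A₁₁| + max(|A₁₂|,|A₁₃|) + max(|A₂₁|,|A₃₁|) + max(|A₂₂|,|A₂₃|,|A₃₂|,|A₃₃|).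
Define φ : ℝ³ → ℝ³ by φ(t,x,y) = (x+y, x−y, x−y). Then the operator norm of φ w.r.t. ⦀·⦀ equals
2, while the operator norm of φ ⊗ φ (acting on matrices by A ↦ M A Mᵀ) is at least 8; in
particular ‖φ ⊗ φ‖ > ‖φ‖², so the pair of norms does not satisfy the strongly uniform crossnorm
property.
-/

open Matrix

/-- The norm ⦀(t,x,y)⦀ = |t| + max(|x|,|y|) on ℝ³. -/
noncomputable def vNorm (v : Fin 3 → ℝ) : ℝ := |v 0| + max |v 1| |v 2|

/-- The tensor norm ⦀·⦀₂ on ℝ³ ⊗ ℝ³, identified with 3×3 matrices. -/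
noncomputable def tNorm (A : Matrix (Fin 3) (Fin 3) ℝ) : ℝ :=
  |A 0 0| + max |A 0 1| |A 0 2| + max |A 1 0| |A 2 0| +
    max (max |A 1 1| |A 1 2|) (max |A 2 1| |A 2 2|)

/-- The operator norm of a map on ℝ³ with respect to `vNorm`. -/
noncomputable def opNormV (f : (Fin 3 → ℝ) → (Fin 3 → ℝ)) : ℝ :=
  sInf {C : ℝ | 0 ≤ C ∧ ∀ v, vNorm (f v) ≤ C * vNorm v}

/-- The operator norm of a map on 3×3 matrices with respect to `tNorm`. -/
noncomputable def opNormT (g : Matrix (Fin 3) (Fin 3) ℝ → Matrix (Fin 3) (Fin 3) ℝ) : ℝ :=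
  sInf {C : ℝ | 0 ≤ C ∧ ∀ A, tNorm (g A) ≤ C * tNorm A}

/-- The matrix of φ(t,x,y) = (x+y, x−y, x−y). -/
noncomputable def M : Matrix (Fin 3) (Fin 3) ℝ := !![0, 1, 1; 0, 1, -1; 0, 1, -1]

lemma abs_add_abs_sub (a b : ℝ) : |a + b| + |a - b| ≤ 2 * max |a| |b| := by
  rcases max_cases |a| |b| with ⟨h1, h2⟩ | ⟨h1, h2⟩ <;> rw [h1] <;>
    cases abs_cases a <;> cases abs_cases b <;>
    cases abs_cases (a + b) <;> cases abs_cases (a - b) <;> linarith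

lemma two_mem : (2 : ℝ) ∈ {C : ℝ | 0 ≤ C ∧ ∀ v, vNorm (M.mulVec v) ≤ C * vNorm v} := by
  refine ⟨by norm_num, fun v => ?_⟩
  have hmv : vNorm (M.mulVec v) = |v 1 + v 2| + max |v 1 - v 2| |v 1 - v 2| := by
    simp only [vNorm, M, Matrix.mul_apply, Matrix.transpose_apply, Fin.sum_univ_three,
    Matrix.cons_val_zero, Matrix.cons_val_one, Matrix.head_cons, Matrix.cons_val_two,
    Matrix.head_fin_const, Matrix.of_apply, Matrix.cons_val', Matrix.empty_val',
    Matrix.cons_val_fin_one, Matrix.vecTail, Matrix.vecHead, Function.comp,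
    Matrix.cons_val_succ, Matrix.mulVec, dotProduct, Matrix.cons_mul, Matrix.vecMul]
    ring_nf
  rw [hmv, max_self]
  have h := abs_add_abs_sub (v 1) (v 2)
  have h0 := abs_nonneg (v 0)
  unfold vNorm
  linarith

lemma vlower : ∀ C ∈ {C : ℝ | 0 ≤ C ∧ ∀ v, vNorm (M.mulVec v) ≤ C * vNorm v}, 2 ≤ C := by
  rintro C ⟨-, hC⟩
  have h := hC ![0, 1, 0]
  have h1 : vNorm (M.mulVec ![0, 1, 0]) = 2 := by
    simp only [vNorm, M, Matrix.mul_apply, Matrix.transpose_apply, Fin.sum_univ_three,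
    Matrix.cons_val_zero, Matrix.cons_val_one, Matrix.head_cons, Matrix.cons_val_two,
    Matrix.head_fin_const, Matrix.of_apply, Matrix.cons_val', Matrix.empty_val',
    Matrix.cons_val_fin_one, Matrix.vecTail, Matrix.vecHead, Function.comp,
    Matrix.cons_val_succ, Matrix.mulVec, dotProduct, Matrix.cons_mul, Matrix.vecMul]
    norm_num
  have h2 : vNorm ![0, 1, 0] = 1 := by
    simp [vNorm]
  rw [h1, h2] at h
  linarith

lemma opNormV_eq : opNormV (M.mulVec) = 2 := by
  unfold opNormV
  apply le_antisymm
  · exact csInf_le ⟨2, vlower⟩ two_mem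
  · exact le_csInf ⟨2, two_mem⟩ vlower

lemma entry_le (A : Matrix (Fin 3) (Fin 3) ℝ) (i j : Fin 3) (hi : i ≠ 0) (hj : j ≠ 0) :
    |A i j| ≤ tNorm A := by
  unfold tNorm
  fin_cases i <;> fin_cases j <;> simp_all <;>
  · have n0 := abs_nonneg (A 0 0)
    have n1 := le_max_left |A 0 1| |A 0 2|
    have n1' := abs_nonneg (A 0 1)
    have n2' := abs_nonneg (A 1 0)
    have n2 := le_max_left |A 1 0| |A 2 0|
    have m1 := le_max_left (max |A 1 1| |A 1 2|) (max |A 2 1| |A 2 2|)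
    have m2 := le_max_right (max |A 1 1| |A 1 2|) (max |A 2 1| |A 2 2|)
    have a1 := le_max_left |A 1 1| |A 1 2|
    have a2 := le_max_right |A 1 1| |A 1 2|
    have b1 := le_max_left |A 2 1| |A 2 2|
    have b2 := le_max_right |A 2 1| |A 2 2|
    linarith

lemma sixteen_mem :
    (16 : ℝ) ∈ {C : ℝ | 0 ≤ C ∧ ∀ A, tNorm ((fun A => M * A * Mᵀ) A) ≤ C * tNorm A} := by
  refine ⟨by norm_num, fun A => ?_⟩
  have h11 := abs_le.mp (entry_le A 1 1 (by decide) (by decide))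
  have h12 := abs_le.mp (entry_le A 1 2 (by decide) (by decide))
  have h21 := abs_le.mp (entry_le A 2 1 (by decide) (by decide))
  have h22 := abs_le.mp (entry_le A 2 2 (by decide) (by decide))
  have e00 : (M * A * Mᵀ) 0 0 = A 1 1 + A 1 2 + A 2 1 + A 2 2 := by
    simp only [M, Matrix.mul_apply, Matrix.transpose_apply, Fin.sum_univ_three,
      Matrix.cons_val_zero, Matrix.cons_val_one, Matrix.head_cons, Matrix.cons_val_two,
      Matrix.head_fin_const, Matrix.of_apply, Matrix.cons_val', Matrix.empty_val',
      Matrix.cons_val_fin_one, Matrix.vecTail, Matrix.vecHead, Function.comp,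
      Matrix.cons_val_succ]
    ring
  have e01 : (M * A * Mᵀ) 0 1 = A 1 1 - A 1 2 + A 2 1 - A 2 2 := by
    simp only [M, Matrix.mul_apply, Matrix.transpose_apply, Fin.sum_univ_three,
      Matrix.cons_val_zero, Matrix.cons_val_one, Matrix.head_cons, Matrix.cons_val_two,
      Matrix.head_fin_const, Matrix.of_apply, Matrix.cons_val', Matrix.empty_val',
      Matrix.cons_val_fin_one, Matrix.vecTail, Matrix.vecHead, Function.comp,
      Matrix.cons_val_succ]
    ring
  have e02 : (M * A * Mᵀ) 0 2 = A 1 1 - A 1 2 + A 2 1 - A 2 2 := by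
    simp only [M, Matrix.mul_apply, Matrix.transpose_apply, Fin.sum_univ_three,
      Matrix.cons_val_zero, Matrix.cons_val_one, Matrix.head_cons, Matrix.cons_val_two,
      Matrix.head_fin_const, Matrix.of_apply, Matrix.cons_val', Matrix.empty_val',
      Matrix.cons_val_fin_one, Matrix.vecTail, Matrix.vecHead, Function.comp,
      Matrix.cons_val_succ]
    ring
  have e10 : (M * A * Mᵀ) 1 0 = A 1 1 + A 1 2 - A 2 1 - A 2 2 := by
    simp only [M, Matrix.mul_apply, Matrix.transpose_apply, Fin.sum_univ_three,
      Matrix.cons_val_zero, Matrix.cons_val_one, Matrix.head_cons, Matrix.cons_val_two,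
      Matrix.head_fin_const, Matrix.of_apply, Matrix.cons_val', Matrix.empty_val',
      Matrix.cons_val_fin_one, Matrix.vecTail, Matrix.vecHead, Function.comp,
      Matrix.cons_val_succ]
    ring
  have e11 : (M * A * Mᵀ) 1 1 = A 1 1 - A 1 2 - A 2 1 + A 2 2 := by
    simp only [M, Matrix.mul_apply, Matrix.transpose_apply, Fin.sum_univ_three,
      Matrix.cons_val_zero, Matrix.cons_val_one, Matrix.head_cons, Matrix.cons_val_two,
      Matrix.head_fin_const, Matrix.of_apply, Matrix.cons_val', Matrix.empty_val',
      Matrix.cons_val_fin_one, Matrix.vecTail, Matrix.vecHead, Function.comp,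
      Matrix.cons_val_succ]
    ring
  have e12 : (M * A * Mᵀ) 1 2 = A 1 1 - A 1 2 - A 2 1 + A 2 2 := by
    simp only [M, Matrix.mul_apply, Matrix.transpose_apply, Fin.sum_univ_three,
      Matrix.cons_val_zero, Matrix.cons_val_one, Matrix.head_cons, Matrix.cons_val_two,
      Matrix.head_fin_const, Matrix.of_apply, Matrix.cons_val', Matrix.empty_val',
      Matrix.cons_val_fin_one, Matrix.vecTail, Matrix.vecHead, Function.comp,
      Matrix.cons_val_succ]
    ring
  have e20 : (M * A * Mᵀ) 2 0 = A 1 1 + A 1 2 - A 2 1 - A 2 2 := by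
    simp only [M, Matrix.mul_apply, Matrix.transpose_apply, Fin.sum_univ_three,
      Matrix.cons_val_zero, Matrix.cons_val_one, Matrix.head_cons, Matrix.cons_val_two,
      Matrix.head_fin_const, Matrix.of_apply, Matrix.cons_val', Matrix.empty_val',
      Matrix.cons_val_fin_one, Matrix.vecTail, Matrix.vecHead, Function.comp,
      Matrix.cons_val_succ]
    ring
  have e21 : (M * A * Mᵀ) 2 1 = A 1 1 - A 1 2 - A 2 1 + A 2 2 := by
    simp only [M, Matrix.mul_apply, Matrix.transpose_apply, Fin.sum_univ_three,
      Matrix.cons_val_zero, Matrix.cons_val_one, Matrix.head_cons, Matrix.cons_val_two,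
      Matrix.head_fin_const, Matrix.of_apply, Matrix.cons_val', Matrix.empty_val',
      Matrix.cons_val_fin_one, Matrix.vecTail, Matrix.vecHead, Function.comp,
      Matrix.cons_val_succ]
    ring
  have e22 : (M * A * Mᵀ) 2 2 = A 1 1 - A 1 2 - A 2 1 + A 2 2 := by
    simp only [M, Matrix.mul_apply, Matrix.transpose_apply, Fin.sum_univ_three,
      Matrix.cons_val_zero, Matrix.cons_val_one, Matrix.head_cons, Matrix.cons_val_two,
      Matrix.head_fin_const, Matrix.of_apply, Matrix.cons_val', Matrix.empty_val',
      Matrix.cons_val_fin_one, Matrix.vecTail, Matrix.vecHead, Function.comp,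
      Matrix.cons_val_succ]
    ring
  have hp : |A 1 1 + A 1 2 + A 2 1 + A 2 2| ≤ 4 * tNorm A := by
    rw [abs_le]; constructor <;> linarith
  have hq : |A 1 1 - A 1 2 + A 2 1 - A 2 2| ≤ 4 * tNorm A := by
    rw [abs_le]; constructor <;> linarith
  have hr : |A 1 1 + A 1 2 - A 2 1 - A 2 2| ≤ 4 * tNorm A := by
    rw [abs_le]; constructor <;> linarith
  have hs : |A 1 1 - A 1 2 - A 2 1 + A 2 2| ≤ 4 * tNorm A := by
    rw [abs_le]; constructor <;> linarith
  show tNorm (M * A * Mᵀ) ≤ 16 * tNorm A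
  have hval : tNorm (M * A * Mᵀ) =
      |A 1 1 + A 1 2 + A 2 1 + A 2 2| + |A 1 1 - A 1 2 + A 2 1 - A 2 2| +
        |A 1 1 + A 1 2 - A 2 1 - A 2 2| + |A 1 1 - A 1 2 - A 2 1 + A 2 2| := by
    unfold tNorm
    rw [e00, e01, e02, e10, e11, e12, e20, e21, e22]
    simp only [max_self]
  rw [hval]
  linarith

lemma tlower : ∀ C ∈ {C : ℝ | 0 ≤ C ∧ ∀ A, tNorm ((fun A => M * A * Mᵀ) A) ≤ C * tNorm A},
    8 ≤ C := by
  rintro C ⟨-, hC⟩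
  have h := hC !![0, 0, 0; 0, 1, 1; 0, 1, -1]
  have h1 : tNorm ((fun A => M * A * Mᵀ) !![0, 0, 0; 0, 1, 1; 0, 1, -1]) = 8 := by
    simp only [tNorm, M, Matrix.mul_apply, Matrix.transpose_apply, Fin.sum_univ_three,
    Matrix.cons_val_zero, Matrix.cons_val_one, Matrix.head_cons, Matrix.cons_val_two,
    Matrix.head_fin_const, Matrix.of_apply, Matrix.cons_val', Matrix.empty_val',
    Matrix.cons_val_fin_one, Matrix.vecTail, Matrix.vecHead, Function.comp,
    Matrix.cons_val_succ, Matrix.mulVec, dotProduct, Matrix.cons_mul, Matrix.vecMul]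
    norm_num
    change 4 + |(2:ℝ)| + |(2:ℝ)| = 8
    norm_num
  have h2 : tNorm !![0, 0, 0; 0, 1, 1; 0, 1, -1] = 1 := by
    simp only [tNorm, Matrix.mul_apply, Matrix.transpose_apply, Fin.sum_univ_three,
    Matrix.cons_val_zero, Matrix.cons_val_one, Matrix.head_cons, Matrix.cons_val_two,
    Matrix.head_fin_const, Matrix.of_apply, Matrix.cons_val', Matrix.empty_val',
    Matrix.cons_val_fin_one, Matrix.vecTail, Matrix.vecHead, Function.comp,
    Matrix.cons_val_succ, Matrix.mulVec, dotProduct, Matrix.cons_mul, Matrix.vecMul]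
    norm_num
  rw [h1, h2] at h
  linarith

lemma opNormT_ge : 8 ≤ opNormT (fun A => M * A * Mᵀ) := by
  unfold opNormT
  exact le_csInf ⟨16, sixteen_mem⟩ tlower

theorem strongly_uniform_crossnorm_fails_for_time_extension :
    opNormV (M.mulVec) = 2 ∧
    8 ≤ opNormT (fun A => M * A * Mᵀ) ∧
    opNormV (M.mulVec) * opNormV (M.mulVec) < opNormT (fun A => M * A * Mᵀ) := by
  refine ⟨opNormV_eq, opNormT_ge, ?_⟩
  rw [opNormV_eq]
  have := opNormT_ge
  linarith
end

section
/- Assume the Setting, let 0 < α ≤ 1, T > 0, n ≥ 1 and R > 0. Equip T^{(n)}(F) with the norm Σ_{i=0}^n ‖y^{(i)}‖*_i, so that T^{(n)}(E) with norm Σ_{i=0}^n ‖a^{(i)}‖_i is the dual of T^{(n)}(F), and identify C_0^α([0,T];T^{(n)}(E)) with the dual of the Arens–Eells space Æ_α([0,T];T^{(n)}(F)). Then the image under the map i (where i(x)(s) = x_{0,s} − 1 and 1 = (1,0,…,0)) of the set {x ∈ 𝒞^{α,n}([0,T];E) : ‖x‖_{𝒞^α} ≤ R} is compact in the weak-* topology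 of C_0^α([0,T];T^{(n)}(E)). -/
/-!
STATEMENT 18:
Assume the Setting (E = F*, strong crossnorm families on the tensor powers, E^{⊗n} the dual of
F^{⊗n}), let 0 < α ≤ 1, T > 0, n ≥ 1 and R > 0. Equip T^{(n)}(F) with the norm Σ‖y^{(i)}‖, so
that T^{(n)}(E) is the dual of T^{(n)}(F), and identify C_0^α([0,T];T^{(n)}(E)) with the dual of
the Arens–Eells space Æ_α([0,T];T^{(n)}(F)). Then the image under the map i (where
i(x)(s) = x_{0,s} − 1) of {x ∈ 𝒞^{α,n}([0,T];E) : ‖x‖_{𝒞^α} ≤ R} is compact in the weak-*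
topology of C_0^α([0,T];T^{(n)}(E)).

Encoding: the completions F^{⊗m} are Banach spaces `Y m`, and E^{⊗m} is realized as the dual
`NormedSpace.Dual ℝ (Y m)`; the tensor multiplications `mulE` (on the duals) and `mulY` are given,
compatible with the duality pairing, with the strong crossnorm property and dense spans of
elementary tensors.  A multiplicative functional is recorded by its components
x^{(j+1)} : [0,T]² → (Y (j+1))*, j+1 ≤ n, satisfying Chen's relation; the condition
‖x‖_{𝒞^α} ≤ R is membership of R in the set of homogeneous Hölder bounds.  An element of
T^{(n)}(F) is a pair (y⁰, (y^{(j+1)})_{j<n}); a molecule is a finitely supported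
T^{(n)}(F)-valued function on [0,T] summing to 0, and a path p pairs with a molecule m by
⟨p, m⟩ = Σ_t ⟨p(t), m(t)⟩.  Since molecules are dense in the Arens–Eells space, the weak-*
topology of the dual C_0^α([0,T];T^{(n)}(E)) restricted to the (norm-bounded) image of the R-ball
is the topology of pointwise convergence of these pairings, i.e. the product topology on
functions from molecules to ℝ; compactness of the image of the R-ball under x ↦ ⟨i(x), ·⟩ in this
topology is the assertion below.
-/

open scoped TensorProduct

/-- Cast between equal-index members of a family. -/
def castX {X : ℕ → Type*} {a b : ℕ} (h : a = b) (v : X a) : X b := h ▸ v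

/-- Chen's relation for the components of a multiplicative functional of order `n`. -/
def IsMultiplicativeFunctional (n : ℕ) {X : ℕ → Type*} [∀ m, AddCommGroup (X m)]
    (mul : ∀ a b : ℕ, X a → X b → X (a + b)) (T : ℝ)
    (x : ∀ j : ℕ, ℝ → ℝ → X (j + 1)) : Prop :=
  ∀ s ∈ Set.Icc (0 : ℝ) T, ∀ u ∈ Set.Icc (0 : ℝ) T, ∀ t ∈ Set.Icc (0 : ℝ) T,
    ∀ k : ℕ, k < n →
    x k s t = x k s u + x k u t +
      ∑ i ∈ (Finset.range k).attach,
        castX (X := X) (by have := Finset.mem_range.mp i.2; omega)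
          (mul (i.1 + 1) ((k - i.1 - 1) + 1) (x i.1 s u) (x (k - i.1 - 1) u t))

/-- The set of homogeneous α-Hölder bounds: `R` is a bound iff
`‖x^{(j)}_{s,t}‖ ≤ R^j |t-s|^{jα}` for all `1 ≤ j ≤ n`. -/
def HolderBounds (n : ℕ) {X : ℕ → Type*} [∀ m, NormedAddCommGroup (X m)]
    (T α : ℝ) (x : ∀ j : ℕ, ℝ → ℝ → X (j + 1)) : Set ℝ :=
  {R : ℝ | 0 ≤ R ∧ ∀ j < n, ∀ s ∈ Set.Icc (0 : ℝ) T, ∀ t ∈ Set.Icc (0 : ℝ) T,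
    ‖x j s t‖ ≤ R ^ (j + 1) * |t - s| ^ (((j + 1) : ℝ) * α)}

/-- `m : ℝ →₀ G` is a molecule on `[0,T]`. -/
def IsMoleculeG {G : Type*} [AddCommGroup G] (T : ℝ) (m : ℝ →₀ G) : Prop :=
  (∀ t ∈ m.support, t ∈ Set.Icc (0 : ℝ) T) ∧ (∑ t ∈ m.support, m t) = 0

lemma castX_dual_apply {Y : ℕ → Type*} [∀ m, NormedAddCommGroup (Y m)]
    [∀ m, NormedSpace ℝ (Y m)] {a b : ℕ} (h : a = b)
    (v : StrongDual ℝ (Y a)) (z : Y b) :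
    castX (X := fun m => StrongDual ℝ (Y m)) h v z
      = v (castX (X := Y) h.symm z) := by subst h; rfl

lemma multiplicative_iff_pt {Y : ℕ → Type*} [∀ m, NormedAddCommGroup (Y m)]
    [∀ m, NormedSpace ℝ (Y m)]
    (mulE : ∀ a b : ℕ, StrongDual ℝ (Y a) →L[ℝ] StrongDual ℝ (Y b) →L[ℝ]
      StrongDual ℝ (Y (a + b)))
    (n : ℕ) (T : ℝ) (x : ∀ j : ℕ, ℝ → ℝ → StrongDual ℝ (Y (j + 1))) :
    IsMultiplicativeFunctional n (fun a b v w => mulE a b v w) T x ↔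
    ∀ s ∈ Set.Icc (0 : ℝ) T, ∀ u ∈ Set.Icc (0 : ℝ) T, ∀ t ∈ Set.Icc (0 : ℝ) T,
      ∀ k : ℕ, k < n → ∀ z : Y (k + 1),
      x k s t z = x k s u z + x k u t z +
        ∑ i ∈ (Finset.range k).attach,
          mulE (i.1 + 1) ((k - i.1 - 1) + 1) (x i.1 s u) (x (k - i.1 - 1) u t)
            (castX (X := Y)
              ((by have := Finset.mem_range.mp i.2; omega :
                (i.1 + 1) + ((k - i.1 - 1) + 1) = k + 1)).symm z) := by
  unfold IsMultiplicativeFunctional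
  refine forall₂_congr fun s hs => forall₂_congr fun u hu => forall₂_congr fun t ht =>
    forall₂_congr fun k hk => ?_
  constructor
  · intro h z
    rw [h]
    simp only [ContinuousLinearMap.add_apply, ContinuousLinearMap.sum_apply]
    congr 1
    exact Finset.sum_congr rfl fun i hi => castX_dual_apply _ _ _
  · intro h
    refine ContinuousLinearMap.ext fun z => ?_
    rw [h z]
    simp only [ContinuousLinearMap.add_apply, ContinuousLinearMap.sum_apply]
    congr 1
    exact (Finset.sum_congr rfl fun i hi => castX_dual_apply _ _ _).symm
lemma mulE_eval_continuousOn
    {Y : ℕ → Type*} [∀ m, NormedAddCommGroup (Y m)] [∀ m, NormedSpace ℝ (Y m)]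
    (mulE : ∀ a b : ℕ, StrongDual ℝ (Y a) →L[ℝ] StrongDual ℝ (Y b) →L[ℝ]
      StrongDual ℝ (Y (a + b)))
    (mulY : ∀ a b : ℕ, Y a →ₗ[ℝ] Y b →ₗ[ℝ] Y (a + b))
    (hcompat : ∀ (a b : ℕ) (x : StrongDual ℝ (Y a)) (x' : StrongDual ℝ (Y b))
      (y : Y a) (y' : Y b), mulE a b x x' (mulY a b y y') = x y * x' y')
    (hcross : ∀ (a b : ℕ) (x : StrongDual ℝ (Y a)) (x' : StrongDual ℝ (Y b)),
      ‖mulE a b x x'‖ = ‖x‖ * ‖x'‖)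
    (hdense : ∀ a b : ℕ, Dense (↑(Submodule.span ℝ
      (Set.range fun p : Y a × Y b => mulY a b p.1 p.2)) : Set (Y (a + b))))
    (a b : ℕ) (C1 C2 : ℝ) (z : Y (a + b)) :
    ContinuousOn (fun p : WeakDual ℝ (Y a) × WeakDual ℝ (Y b) =>
        mulE a b (WeakDual.toStrongDual p.1) (WeakDual.toStrongDual p.2) z)
      {p : WeakDual ℝ (Y a) × WeakDual ℝ (Y b) |
        ‖WeakDual.toStrongDual p.1‖ ≤ C1 ∧ ‖WeakDual.toStrongDual p.2‖ ≤ C2} := by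
  -- a sequence of elements of the span converging to z
  obtain ⟨zs, hzs_mem, hzs_lim⟩ := mem_closure_iff_seq_limit.mp ((hdense a b) z)
  -- continuity for elements of the span
  have key : ∀ w ∈ Submodule.span ℝ
      (Set.range fun p : Y a × Y b => mulY a b p.1 p.2),
      Continuous (fun p : WeakDual ℝ (Y a) × WeakDual ℝ (Y b) =>
        mulE a b (WeakDual.toStrongDual p.1) (WeakDual.toStrongDual p.2) w) := by
    intro w hw
    induction hw using Submodule.span_induction with
    | mem w hwmem =>
      obtain ⟨⟨y1, y2⟩, rfl⟩ := hwmem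
      simp only [hcompat]
      exact ((WeakDual.eval_continuous y1).comp continuous_fst).mul
        ((WeakDual.eval_continuous y2).comp continuous_snd)
    | zero => simp only [map_zero]; exact continuous_const
    | add w1 w2 h1 h2 ih1 ih2 => simp only [map_add]; exact ih1.add ih2
    | smul c w hw ih => simp only [map_smul, smul_eq_mul]; exact continuous_const.mul ih
  set D : ℝ := max C1 0 * max C2 0 + 1 with hD
  have hDpos : 0 < D := by positivity
  have hunif : TendstoUniformlyOn
      (fun m (p : WeakDual ℝ (Y a) × WeakDual ℝ (Y b)) =>
        mulE a b (WeakDual.toStrongDual p.1) (WeakDual.toStrongDual p.2) (zs m))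
      (fun p => mulE a b (WeakDual.toStrongDual p.1) (WeakDual.toStrongDual p.2) z)
      Filter.atTop
      {p : WeakDual ℝ (Y a) × WeakDual ℝ (Y b) |
        ‖WeakDual.toStrongDual p.1‖ ≤ C1 ∧ ‖WeakDual.toStrongDual p.2‖ ≤ C2} := by
    rw [Metric.tendstoUniformlyOn_iff]
    intro ε hε
    have hball : ∀ᶠ m in Filter.atTop, dist (zs m) z < ε / D :=
      hzs_lim (Metric.ball_mem_nhds z (by positivity))
    filter_upwards [hball] with m hm p hp
    have hb1 : ‖WeakDual.toStrongDual p.1‖ ≤ max C1 0 := le_trans hp.1 (le_max_left _ _)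
    have hb2 : ‖WeakDual.toStrongDual p.2‖ ≤ max C2 0 := le_trans hp.2 (le_max_left _ _)
    have : dist (mulE a b (WeakDual.toStrongDual p.1) (WeakDual.toStrongDual p.2) z)
        (mulE a b (WeakDual.toStrongDual p.1) (WeakDual.toStrongDual p.2) (zs m))
        = ‖mulE a b (WeakDual.toStrongDual p.1) (WeakDual.toStrongDual p.2) (z - zs m)‖ := by
      rw [dist_eq_norm, ← map_sub]
    rw [this]
    have hle : ‖mulE a b (WeakDual.toStrongDual p.1) (WeakDual.toStrongDual p.2) (z - zs m)‖
        ≤ (max C1 0 * max C2 0) * ‖z - zs m‖ := by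
      calc ‖mulE a b (WeakDual.toStrongDual p.1) (WeakDual.toStrongDual p.2) (z - zs m)‖
          ≤ ‖mulE a b (WeakDual.toStrongDual p.1) (WeakDual.toStrongDual p.2)‖ * ‖z - zs m‖ :=
            ContinuousLinearMap.le_opNorm _ _
        _ ≤ (max C1 0 * max C2 0) * ‖z - zs m‖ := by
            rw [hcross]
            exact mul_le_mul_of_nonneg_right
              (mul_le_mul hb1 hb2 (norm_nonneg _) (le_trans (norm_nonneg _) hb1))
              (norm_nonneg _)
    have hnz : ‖z - zs m‖ < ε / D := by
      rw [← dist_eq_norm, dist_comm]; exact hm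
    have h1 : (max C1 0 * max C2 0) * ‖z - zs m‖ < ε := by
      have h0 : (0:ℝ) ≤ max C1 0 * max C2 0 := by positivity
      calc (max C1 0 * max C2 0) * ‖z - zs m‖
          ≤ (max C1 0 * max C2 0) * (ε / D) := mul_le_mul_of_nonneg_left hnz.le h0
        _ < D * (ε / D) := by
            exact mul_lt_mul_of_pos_right (by simp [hD]) (div_pos hε hDpos)
        _ = ε := mul_div_cancel₀ ε hDpos.ne'
    exact lt_of_le_of_lt hle h1
  exact hunif.continuousOn (Filter.Eventually.of_forall fun m => (key _ (hzs_mem m)).continuousOn).frequently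

set_option maxHeartbeats 2000000 in
theorem image_of_Holder_ball_is_weakStar_compact
    {Y : ℕ → Type*} [∀ m, NormedAddCommGroup (Y m)] [∀ m, NormedSpace ℝ (Y m)]
    [∀ m, CompleteSpace (Y m)]
    -- tensor multiplication on the E-side (E^{⊗m} = Dual (Y m)) and on the F-side
    (mulE : ∀ a b : ℕ, StrongDual ℝ (Y a) →L[ℝ] StrongDual ℝ (Y b) →L[ℝ]
      StrongDual ℝ (Y (a + b)))
    (mulY : ∀ a b : ℕ, Y a →ₗ[ℝ] Y b →ₗ[ℝ] Y (a + b))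
    (hcompat : ∀ (a b : ℕ) (x : StrongDual ℝ (Y a)) (x' : StrongDual ℝ (Y b))
      (y : Y a) (y' : Y b), mulE a b x x' (mulY a b y y') = x y * x' y')
    (hcross : ∀ (a b : ℕ) (x : StrongDual ℝ (Y a)) (x' : StrongDual ℝ (Y b)),
      ‖mulE a b x x'‖ = ‖x‖ * ‖x'‖)
    (hdense : ∀ a b : ℕ, Dense (↑(Submodule.span ℝ
      (Set.range fun p : Y a × Y b => mulY a b p.1 p.2)) : Set (Y (a + b))))
    (T α : ℝ) (hT : 0 < T) (hα : 0 < α) (hα' : α ≤ 1) (n : ℕ) (hn : 1 ≤ n) (R : ℝ) (hR : 0 < R) :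
    -- the image of the R-ball of 𝒞^{α,n}([0,T];E) under x ↦ ⟨i(x), ·⟩, as a set of functions on
    -- the molecules of T^{(n)}(F), is compact for the topology of pointwise convergence
    IsCompact {g : {m : ℝ →₀ (ℝ × (∀ j : Fin n, Y ((j : ℕ) + 1))) // IsMoleculeG T m} → ℝ |
      ∃ x : ∀ j : ℕ, ℝ → ℝ → StrongDual ℝ (Y (j + 1)),
        IsMultiplicativeFunctional n (fun a b v w => mulE a b v w) T x ∧
        R ∈ HolderBounds n (X := fun m => StrongDual ℝ (Y m)) T α x ∧
        g = fun m : {m : ℝ →₀ (ℝ × (∀ j : Fin n, Y ((j : ℕ) + 1))) // IsMoleculeG T m} =>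
          (m.1).sum fun t y => ∑ j : Fin n, x (j : ℕ) 0 t (y.2 j)} := by
  classical
  -- the bound function
  set B : ℕ → ℝ → ℝ → ℝ := fun j s t =>
    if s ∈ Set.Icc (0 : ℝ) T ∧ t ∈ Set.Icc (0 : ℝ) T then
      R ^ (j + 1) * |t - s| ^ (((j + 1) : ℝ) * α) else 0 with hBdef
  have hB0 : ∀ j s t, 0 ≤ B j s t := by
    intro j s t
    rw [hBdef]
    dsimp only
    split
    · positivity
    · exact le_refl 0
  -- the compact parameter space
  set K : Set (∀ j : ℕ, ℝ → ℝ → WeakDual ℝ (Y (j + 1))) :=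
    {x | ∀ j s t, ‖WeakDual.toStrongDual (x j s t)‖ ≤ B j s t} with hKdef
  have hKeq : K = Set.pi Set.univ fun j => Set.pi Set.univ fun s => Set.pi Set.univ fun t =>
      (WeakDual.toStrongDual (E := Y (j + 1))) ⁻¹' Metric.closedBall 0 (B j s t) := by
    ext x
    simp [hKdef, Set.mem_pi, Metric.mem_closedBall, dist_zero_right]
  have hKcompact : IsCompact K := by
    rw [hKeq]
    exact isCompact_univ_pi fun j => isCompact_univ_pi fun s => isCompact_univ_pi fun t =>
      WeakDual.isCompact_closedBall 0 (B j s t)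
  have hKclosed : IsClosed K := by
    rw [hKeq]
    exact isClosed_set_pi fun j _ => isClosed_set_pi fun s _ => isClosed_set_pi fun t _ =>
      WeakDual.isClosed_closedBall 0 (B j s t)
  -- evaluation maps are continuous
  have e1 : ∀ (j : ℕ) (a b : ℝ) (w : Y (j + 1)),
      Continuous (fun x : ∀ j : ℕ, ℝ → ℝ → WeakDual ℝ (Y (j + 1)) =>
        WeakDual.toStrongDual (x j a b) w) := by
    intro j a b w
    exact (WeakDual.eval_continuous w).comp
      ((continuous_apply b).comp ((continuous_apply a).comp (continuous_apply j)))
  -- the parameter set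
  set S : Set (∀ j : ℕ, ℝ → ℝ → WeakDual ℝ (Y (j + 1))) :=
    K ∩ {x | IsMultiplicativeFunctional n (fun a b v w => mulE a b v w) T
      (fun j s t => WeakDual.toStrongDual (x j s t))} with hSdef
  have hSclosed : IsClosed S := by
    have hSeq : S = K ∩ ⋂ (s : ℝ) (_ : s ∈ Set.Icc (0 : ℝ) T) (u : ℝ) (_ : u ∈ Set.Icc (0 : ℝ) T)
        (t : ℝ) (_ : t ∈ Set.Icc (0 : ℝ) T) (k : ℕ) (_ : k < n) (z : Y (k + 1)),
        (K ∩ {x | WeakDual.toStrongDual (x k s t) z = WeakDual.toStrongDual (x k s u) z +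
          WeakDual.toStrongDual (x k u t) z +
          ∑ i ∈ (Finset.range k).attach,
            mulE (i.1 + 1) ((k - i.1 - 1) + 1) (WeakDual.toStrongDual (x i.1 s u))
              (WeakDual.toStrongDual (x (k - i.1 - 1) u t))
              (castX (X := Y)
                ((by have := Finset.mem_range.mp i.2; omega :
                  (i.1 + 1) + ((k - i.1 - 1) + 1) = k + 1)).symm z)}) := by
      ext x
      simp only [hSdef, Set.mem_inter_iff, Set.mem_iInter, Set.mem_setOf_eq,
        multiplicative_iff_pt]
      constructor
      · rintro ⟨h1, h2⟩
        exact ⟨h1, fun s hs u hu t ht k hk z => ⟨h1, h2 s hs u hu t ht k hk z⟩⟩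
      · rintro ⟨h1, h2⟩
        exact ⟨h1, fun s hs u hu t ht k hk z => (h2 s hs u hu t ht k hk z).2⟩
    rw [hSeq]
    refine hKclosed.inter ?_
    refine isClosed_iInter fun s => isClosed_iInter fun hs => isClosed_iInter fun u =>
      isClosed_iInter fun hu => isClosed_iInter fun t => isClosed_iInter fun ht =>
      isClosed_iInter fun k => isClosed_iInter fun hk => isClosed_iInter fun z => ?_
    -- each piece is closed, being a relatively closed condition on the compact set K
    have hcont : ContinuousOn (fun x : ∀ j : ℕ, ℝ → ℝ → WeakDual ℝ (Y (j + 1)) =>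
        (WeakDual.toStrongDual (x k s u) z + WeakDual.toStrongDual (x k u t) z +
          ∑ i ∈ (Finset.range k).attach,
            mulE (i.1 + 1) ((k - i.1 - 1) + 1) (WeakDual.toStrongDual (x i.1 s u))
              (WeakDual.toStrongDual (x (k - i.1 - 1) u t))
              (castX (X := Y)
                ((by have := Finset.mem_range.mp i.2; omega :
                  (i.1 + 1) + ((k - i.1 - 1) + 1) = k + 1)).symm z))
          - WeakDual.toStrongDual (x k s t) z) K := by
      refine ContinuousOn.sub (ContinuousOn.add
        (((e1 k s u z).add (e1 k u t z)).continuousOn) ?_) ((e1 k s t z).continuousOn)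
      refine continuousOn_finset_sum _ fun i _ => ?_
      have hpair : Continuous (fun x : ∀ j : ℕ, ℝ → ℝ → WeakDual ℝ (Y (j + 1)) =>
          ((x i.1 s u, x (k - i.1 - 1) u t) :
            WeakDual ℝ (Y (i.1 + 1)) × WeakDual ℝ (Y ((k - i.1 - 1) + 1)))) :=
        ((continuous_apply u).comp ((continuous_apply s).comp (continuous_apply i.1))).prodMk
          ((continuous_apply t).comp ((continuous_apply u).comp (continuous_apply (k - i.1 - 1))))
      refine (mulE_eval_continuousOn mulE mulY hcompat hcross hdense
        (i.1 + 1) ((k - i.1 - 1) + 1) (B i.1 s u) (B (k - i.1 - 1) u t) _).comp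
        hpair.continuousOn ?_
      intro x hx
      exact ⟨hx i.1 s u, hx (k - i.1 - 1) u t⟩
    have : K ∩ {x | WeakDual.toStrongDual (x k s t) z = WeakDual.toStrongDual (x k s u) z +
        WeakDual.toStrongDual (x k u t) z +
        ∑ i ∈ (Finset.range k).attach,
          mulE (i.1 + 1) ((k - i.1 - 1) + 1) (WeakDual.toStrongDual (x i.1 s u))
            (WeakDual.toStrongDual (x (k - i.1 - 1) u t))
            (castX (X := Y)
              ((by have := Finset.mem_range.mp i.2; omega :
                (i.1 + 1) + ((k - i.1 - 1) + 1) = k + 1)).symm z)} =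
        K ∩ (fun x : ∀ j : ℕ, ℝ → ℝ → WeakDual ℝ (Y (j + 1)) =>
        (WeakDual.toStrongDual (x k s u) z + WeakDual.toStrongDual (x k u t) z +
          ∑ i ∈ (Finset.range k).attach,
            mulE (i.1 + 1) ((k - i.1 - 1) + 1) (WeakDual.toStrongDual (x i.1 s u))
              (WeakDual.toStrongDual (x (k - i.1 - 1) u t))
              (castX (X := Y)
                ((by have := Finset.mem_range.mp i.2; omega :
                  (i.1 + 1) + ((k - i.1 - 1) + 1) = k + 1)).symm z))
          - WeakDual.toStrongDual (x k s t) z) ⁻¹' {0} := by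
      ext x
      simp only [Set.mem_inter_iff, Set.mem_setOf_eq, Set.mem_preimage,
        Set.mem_singleton_iff, sub_eq_zero]
      exact and_congr_right fun _ => eq_comm
    rw [this]
    exact hcont.preimage_isClosed_of_isClosed hKclosed isClosed_singleton
  have hScompact : IsCompact S := hKcompact.of_isClosed_subset hSclosed Set.inter_subset_left
  -- the pairing map
  set Θ : (∀ j : ℕ, ℝ → ℝ → WeakDual ℝ (Y (j + 1))) →
      ({m : ℝ →₀ (ℝ × (∀ j : Fin n, Y ((j : ℕ) + 1))) // IsMoleculeG T m} → ℝ) :=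
    fun x m => (m.1).sum fun t y => ∑ j : Fin n,
      WeakDual.toStrongDual (x (j : ℕ) 0 t) (y.2 j) with hΘdef
  have hΘcont : Continuous Θ := by
    refine continuous_pi fun m => ?_
    simp only [hΘdef, Finsupp.sum]
    exact continuous_finset_sum _ fun t _ => continuous_finset_sum _ fun j _ =>
      e1 (j : ℕ) 0 t _
  suffices hset : {g : {m : ℝ →₀ (ℝ × (∀ j : Fin n, Y ((j : ℕ) + 1))) // IsMoleculeG T m} → ℝ |
      ∃ x : ∀ j : ℕ, ℝ → ℝ → StrongDual ℝ (Y (j + 1)),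
        IsMultiplicativeFunctional n (fun a b v w => mulE a b v w) T x ∧
        R ∈ HolderBounds n (X := fun m => StrongDual ℝ (Y m)) T α x ∧
        g = fun m : {m : ℝ →₀ (ℝ × (∀ j : Fin n, Y ((j : ℕ) + 1))) // IsMoleculeG T m} =>
          (m.1).sum fun t y => ∑ j : Fin n, x (j : ℕ) 0 t (y.2 j)} = Θ '' S by
    rw [hset]
    exact hScompact.image hΘcont
  ext g
  constructor
  · rintro ⟨x, hchen, hHol, rfl⟩
    refine ⟨fun j a b => if j < n ∧ a ∈ Set.Icc (0 : ℝ) T ∧ b ∈ Set.Icc (0 : ℝ) T then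
      StrongDual.toWeakDual (x j a b) else 0, ⟨?_, ?_⟩, ?_⟩
    · -- membership in K
      intro j s t
      dsimp only
      split
      · rename_i h
        have hB : B j s t = R ^ (j + 1) * |t - s| ^ (((j + 1) : ℝ) * α) := by
          rw [hBdef]; exact if_pos ⟨h.2.1, h.2.2⟩
        rw [hB]
        exact hHol.2 j h.1 s h.2.1 t h.2.2
      · simpa using hB0 j s t
    · -- Chen's relation
      intro s hs u hu t ht k hk
      have hx' : ∀ (j : ℕ), j < n → ∀ a ∈ Set.Icc (0 : ℝ) T, ∀ b ∈ Set.Icc (0 : ℝ) T,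
          WeakDual.toStrongDual
            (if j < n ∧ a ∈ Set.Icc (0 : ℝ) T ∧ b ∈ Set.Icc (0 : ℝ) T then
              StrongDual.toWeakDual (x j a b) else 0) = x j a b := by
        intro j hj a ha b hb
        rw [if_pos ⟨hj, ha, hb⟩]
        rfl
      dsimp only
      rw [hx' k hk s hs t ht, hx' k hk s hs u hu, hx' k hk u hu t ht]
      have hsum : ∀ (xx : ∀ j : ℕ, ℝ → ℝ → StrongDual ℝ (Y (j + 1))),
          True := fun _ => trivial
      have := hchen s hs u hu t ht k hk
      rw [this]
      congr 1
      refine Finset.sum_congr rfl fun i hi => ?_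
      have hi1 : i.1 < n := by have := Finset.mem_range.mp i.2; omega
      have hi2 : k - i.1 - 1 < n := by have := Finset.mem_range.mp i.2; omega
      rw [hx' i.1 hi1 s hs u hu, hx' (k - i.1 - 1) hi2 u hu t ht]
    · -- the pairings agree
      funext m
      rw [hΘdef]
      dsimp only
      refine Finset.sum_congr rfl fun t ht => Finset.sum_congr rfl fun j _ => ?_
      have : (if (j : ℕ) < n ∧ (0 : ℝ) ∈ Set.Icc (0 : ℝ) T ∧ t ∈ Set.Icc (0 : ℝ) T then
          StrongDual.toWeakDual (x (j : ℕ) 0 t) else 0) =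
          StrongDual.toWeakDual (x (j : ℕ) 0 t) :=
        if_pos ⟨j.2, ⟨le_refl 0, hT.le⟩, m.2.1 t ht⟩
      rw [this]
      rfl
  · rintro ⟨x', ⟨hK', hchen⟩, rfl⟩
    refine ⟨fun j a b => WeakDual.toStrongDual (x' j a b), hchen, ⟨hR.le, ?_⟩, rfl⟩
    intro j hj s hs t ht
    have h := hK' j s t
    have hB : B j s t = R ^ (j + 1) * |t - s| ^ (((j + 1) : ℝ) * α) := by
      rw [hBdef]; exact if_pos ⟨hs, ht⟩
    rwa [hB] at h
end
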